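/- arXiv:math/0105222 — 3 statements merged into one kernel-verified Lean document; each statement's English description precedes it below -/
import Mathlib

section
/- Let X ⊆ ℝ be measurable, and for each x ∈ X let (J_i(x))_{i∈ℕ} be a sequence of nested intervals converging to x (i.e. ⋂_i J_i(x) = {x}, J_{i+1}(x) ⊆ J_i(x)) such that for any x₁, x₂ ∈ X and any i, the intervals J_i(x₁) and J_i(x₂) are either equal or disjoint. Let (Q_n) be measurable subsets of ℝ and set q_n(x) = |Q_n ∩ J_n(x)| / |J_n(x)| (ratios of Lebesgue measures). Let Y be the set of x ∈ X which belong to only finitely many Q_n. If ∑_n q_n(x) < ∞ for almost every x ∈ X, then |Y| = |X|. -/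
/-!
Let `q_n` be the relative measure of `Q n` in the level-`n` cell containing a point. On a piece `E`
of `X` of finite measure where `∑ q_n ≤ N`, Tonelli gives `∑ₙ ∫_E q_n < ∞`. By the Lebesgue
density theorem almost every point of `E` eventually sees `E` with density at least `1/2` in its
cells `J n x`; for the set `F` of such points, summing over the disjoint cells gives
`|F ∩ Q n| ≤ 2 ∫_E q_n`, and Borel–Cantelli shows that almost every point of `F` lies in only
finitely many `Q n`.
-/

open MeasureTheory Filter Set Topology
open scoped ENNReal

section CellFamily

variable {α : Type*} [MeasurableSpace α]

structure IsCountableCellFamily (μ : Measure α) (𝓘 : Set (Set α)) : Prop where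
  countable : 𝓘.Countable
  pairwiseDisjoint : 𝓘.PairwiseDisjoint id
  measurableSet : ∀ I ∈ 𝓘, MeasurableSet I
  measure_ne_top : ∀ I ∈ 𝓘, μ I ≠ ∞

/-- The paper's `q_n`: the relative measure of `Q` in the cell of `𝓘` containing `y`
(zero off `⋃₀ 𝓘`). -/
noncomputable def partitionDensity (μ : Measure α) (𝓘 : Set (Set α)) (Q : Set α) (y : α) :
    ℝ≥0∞ :=
  ∑' I : 𝓘, (I : Set α).indicator (fun _ => μ (Q ∩ I) / μ I) y

variable {μ : Measure α} {𝓘 : Set (Set α)} {Q : Set α}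

theorem partitionDensity_eq_of_mem (h𝓘 : 𝓘.PairwiseDisjoint id) {I : Set α} (hI : I ∈ 𝓘)
    {y : α} (hy : y ∈ I) : partitionDensity μ 𝓘 Q y = μ (Q ∩ I) / μ I := by
  rw [partitionDensity, tsum_eq_single ⟨I, hI⟩]
  · exact indicator_of_mem hy _
  · rintro ⟨I', hI'⟩ hne
    refine indicator_of_notMem (fun hy' => hne (Subtype.ext ?_)) _
    exact h𝓘.elim hI' hI (not_disjoint_iff.2 ⟨y, hy', hy⟩)

theorem IsCountableCellFamily.measurable_partitionDensity (h𝓘 : IsCountableCellFamily μ 𝓘) :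
    Measurable (partitionDensity μ 𝓘 Q) := by
  have := h𝓘.countable.to_subtype
  exact Measurable.tsum fun I => measurable_const.indicator (h𝓘.measurableSet I I.2)

theorem IsCountableCellFamily.setLIntegral_partitionDensity (h𝓘 : IsCountableCellFamily μ 𝓘)
    (E : Set α) :
    ∫⁻ y in E, partitionDensity μ 𝓘 Q y ∂μ = ∑' I : 𝓘, μ (Q ∩ I) / μ I * μ (I ∩ E) := by
  have := h𝓘.countable.to_subtype
  have hm (I : 𝓘) : MeasurableSet (I : Set α) := h𝓘.measurableSet I I.2
  simp only [partitionDensity]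
  rw [lintegral_tsum fun I => (measurable_const.indicator (hm I)).aemeasurable]
  congr 1 with I
  rw [lintegral_indicator_const (hm I), Measure.restrict_apply (hm I)]

theorem IsCountableCellFamily.measure_inter_le_mul_setLIntegral (h𝓘 : IsCountableCellFamily μ 𝓘)
    {E F : Set α} {c : ℝ≥0∞} (hF : ∀ x ∈ F, ∃ I ∈ 𝓘, x ∈ I ∧ μ I ≤ c * μ (I ∩ E)) :
    μ (F ∩ Q) ≤ c * ∫⁻ y in E, partitionDensity μ 𝓘 Q y ∂μ := by
  have := h𝓘.countable.to_subtype
  have hcell (I : 𝓘) : μ (F ∩ Q ∩ I) ≤ c * (μ (Q ∩ I) / μ I * μ (I ∩ E)) := by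
    obtain ⟨I, hI⟩ := I
    rcases (F ∩ Q ∩ I).eq_empty_or_nonempty with h | ⟨x, ⟨hxF, -⟩, hxI⟩
    · simp [h]
    obtain ⟨I', hI', hxI', hle⟩ := hF x hxF
    obtain rfl : I' = I := h𝓘.pairwiseDisjoint.elim hI' hI (not_disjoint_iff.2 ⟨x, hxI', hxI⟩)
    rcases eq_or_ne (μ I') 0 with h0 | h0
    · simp [measure_mono_null (inter_subset_right : F ∩ Q ∩ I' ⊆ I') h0]
    calc μ (F ∩ Q ∩ I') ≤ μ (Q ∩ I') := measure_mono (inter_subset_inter_left _ inter_subset_right)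
      _ = μ (Q ∩ I') / μ I' * μ I' := (ENNReal.div_mul_cancel h0 (h𝓘.measure_ne_top I' hI')).symm
      _ ≤ μ (Q ∩ I') / μ I' * (c * μ (I' ∩ E)) := by gcongr
      _ = c * (μ (Q ∩ I') / μ I' * μ (I' ∩ E)) := by ring
  have hcover : F ∩ Q ⊆ ⋃ I : 𝓘, F ∩ Q ∩ I := fun x hx => by
    obtain ⟨I, hI, hxI, -⟩ := hF x hx.1
    exact mem_iUnion.2 ⟨⟨I, hI⟩, hx, hxI⟩
  calc μ (F ∩ Q) ≤ ∑' I : 𝓘, μ (F ∩ Q ∩ I) := (measure_mono hcover).trans (measure_iUnion_le _)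
    _ ≤ ∑' I : 𝓘, c * (μ (Q ∩ I) / μ I * μ (I ∩ E)) := ENNReal.tsum_le_tsum hcell
    _ = c * ∫⁻ y in E, partitionDensity μ 𝓘 Q y ∂μ := by
      rw [ENNReal.tsum_mul_left, h𝓘.setLIntegral_partitionDensity]

theorem ae_eventually_notMem_of_tsum_setLIntegral_partitionDensity_ne_top
    {𝓘 : ℕ → Set (Set α)} (h𝓘 : ∀ n, IsCountableCellFamily μ (𝓘 n)) {Q : ℕ → Set α}
    {E : Set α} {c : ℝ≥0∞} (hc : c ≠ ∞)
    (hsum : ∑' n, ∫⁻ y in E, partitionDensity μ (𝓘 n) (Q n) y ∂μ ≠ ∞) :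
    ∀ᵐ x ∂μ, (∀ᶠ n in atTop, ∃ I ∈ 𝓘 n, x ∈ I ∧ μ I ≤ c * μ (I ∩ E)) →
      ∀ᶠ n in atTop, x ∉ Q n := by
  set F : ℕ → Set α := fun m => {x | ∀ n ≥ m, ∃ I ∈ 𝓘 n, x ∈ I ∧ μ I ≤ c * μ (I ∩ E)}
  have hF (m : ℕ) : ∀ᵐ x ∂μ, x ∈ F m → ∀ᶠ n in atTop, x ∉ Q n := by
    have hsum' : ∑' n, μ {x | m ≤ n ∧ x ∈ F m ∩ Q n} ≠ ∞ := by
      refine ne_top_of_le_ne_top (ENNReal.mul_ne_top hc hsum) ?_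
      rw [← ENNReal.tsum_mul_left]
      refine ENNReal.tsum_le_tsum fun n => ?_
      by_cases hn : m ≤ n
      · simp only [hn, true_and, ofPred_mem_eq]
        exact (h𝓘 n).measure_inter_le_mul_setLIntegral fun x hx => hx n hn
      · simp [hn]
    filter_upwards [ae_eventually_notMem hsum'] with x hx hxF
    filter_upwards [hx, eventually_ge_atTop m] with n hn hmn hxQ
    exact hn ⟨hmn, hxF, hxQ⟩
  filter_upwards [ae_all_iff.2 hF] with x hx hgood
  obtain ⟨m, hm⟩ := eventually_atTop.1 hgood
  exact hx m hm

end CellFamily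

section Vitali

variable {α : Type*} [PseudoMetricSpace α] [MeasurableSpace α] [SecondCountableTopology α]
  [BorelSpace α] {μ : Measure α} [IsLocallyFiniteMeasure μ]

theorem VitaliFamily.ae_eventually_measure_le_two_mul_measure_inter (v : VitaliFamily μ)
    (E : Set α) :
    ∀ᵐ x ∂μ.restrict E, ∀ I : ℕ → Set α, Tendsto I atTop (v.filterAt x) →
      (∀ n, μ (I n) ≠ ∞) → ∀ᶠ n in atTop, μ (I n) ≤ 2 * μ (I n ∩ E) := by
  filter_upwards [v.ae_tendsto_measure_inter_div E] with x hx I hI hfin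
  filter_upwards [(hx.comp hI).eventually (lt_mem_nhds (ENNReal.inv_lt_one.2 ENNReal.one_lt_two))]
    with n hn
  rw [Function.comp_apply, ENNReal.lt_div_iff_mul_lt (Or.inr (by simp)) (Or.inl (hfin n)),
    inter_comm] at hn
  calc μ (I n) = 2 * (2⁻¹ * μ (I n)) := by
        rw [← mul_assoc, ENNReal.mul_inv_cancel two_ne_zero ENNReal.ofNat_ne_top, one_mul]
    _ ≤ 2 * μ (I n ∩ E) := by gcongr

theorem VitaliFamily.ae_eventually_notMem_of_tsum_partitionDensity_ne_top (v : VitaliFamily μ)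
    {X : Set α} (hX : MeasurableSet X) {𝓘 : ℕ → Set (Set α)}
    (h𝓘 : ∀ n, IsCountableCellFamily μ (𝓘 n)) {J : ℕ → α → Set α}
    (hJ : ∀ x ∈ X, ∀ n, J n x ∈ 𝓘 n ∧ x ∈ J n x)
    (hJv : ∀ x ∈ X, Tendsto (fun n => J n x) atTop (v.filterAt x)) {Q : ℕ → Set α}
    (hsum : ∀ᵐ x ∂μ.restrict X, ∑' n, partitionDensity μ (𝓘 n) (Q n) x ≠ ∞) :
    ∀ᵐ x ∂μ.restrict X, ∀ᶠ n in atTop, x ∉ Q n := by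
  set S : α → ℝ≥0∞ := fun x => ∑' n, partitionDensity μ (𝓘 n) (Q n) x
  have hS : Measurable S := Measurable.tsum fun n => (h𝓘 n).measurable_partitionDensity
  set E : ℕ → Set α := fun N => X ∩ spanningSets μ N ∩ {x | S x ≤ N}
  have hE (N : ℕ) : MeasurableSet (E N) :=
    (hX.inter (measurableSet_spanningSets μ N)).inter (hS measurableSet_Iic)
  have hEfin (N : ℕ) : ∑' n, ∫⁻ y in E N, partitionDensity μ (𝓘 n) (Q n) y ∂μ ≠ ∞ := by
    rw [← lintegral_tsum fun n => (h𝓘 n).measurable_partitionDensity.aemeasurable]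
    have hfin : μ (E N) ≠ ∞ := ((measure_mono (inter_subset_left.trans inter_subset_right)).trans_lt
      (measure_spanningSets_lt_top μ N)).ne
    refine ne_top_of_le_ne_top (ENNReal.mul_ne_top (ENNReal.natCast_ne_top N) hfin) ?_
    exact (setLIntegral_mono measurable_const fun x hx => hx.2).trans_eq (setLIntegral_const _ _)
  have hEgood (N : ℕ) : ∀ᵐ x ∂μ, x ∈ E N → ∀ᶠ n in atTop, x ∉ Q n := by
    rw [← ae_restrict_iff' (hE N)]
    filter_upwards [v.ae_eventually_measure_le_two_mul_measure_inter (E N),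
      ae_restrict_of_ae (ae_eventually_notMem_of_tsum_setLIntegral_partitionDensity_ne_top h𝓘
        (ENNReal.ofNat_ne_top (n := 2)) (hEfin N)), ae_restrict_mem (hE N)] with x hdens hBC hx
    have hxX : x ∈ X := hx.1.1
    refine hBC ?_
    filter_upwards [hdens (fun n => J n x) (hJv x hxX)
      fun n => (h𝓘 n).measure_ne_top _ (hJ x hxX n).1] with n hn
    exact ⟨J n x, (hJ x hxX n).1, (hJ x hxX n).2, hn⟩
  filter_upwards [hsum, ae_restrict_mem hX, ae_restrict_of_ae (ae_all_iff.2 hEgood)]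
    with x hSx hx hgood
  obtain ⟨N₁, hN₁⟩ := ENNReal.exists_nat_gt hSx
  refine hgood (max N₁ (spanningSetsIndex μ x)) ⟨⟨hx, mem_spanningSets_of_index_le μ x ?_⟩, ?_⟩
  · exact le_max_right _ _
  · exact hN₁.le.trans (Nat.cast_le.2 (le_max_left _ _))

end Vitali

theorem Set.pairwiseDisjoint_image_of_eq_or_disjoint {β γ : Type*} {X : Set β} {J : β → Set γ}
    (h : ∀ x ∈ X, ∀ y ∈ X, J x = J y ∨ Disjoint (J x) (J y)) : (J '' X).PairwiseDisjoint id := by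
  rintro _ ⟨x, hx, rfl⟩ _ ⟨y, hy, rfl⟩ hne
  exact (h x hx y hy).resolve_left hne

theorem isCountableCellFamily_volume_of_Icc {𝓘 : Set (Set ℝ)} (hd : 𝓘.PairwiseDisjoint id)
    (hI : ∀ I ∈ 𝓘, ∃ a b, a < b ∧ I = Icc a b) : IsCountableCellFamily volume 𝓘 where
  countable := hd.countable_of_nonempty_interior fun I hI' => by
    obtain ⟨a, b, hab, rfl⟩ := hI I hI'
    simpa using hab
  pairwiseDisjoint := hd
  measurableSet I hI' := by
    obtain ⟨a, b, -, rfl⟩ := hI I hI'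
    exact measurableSet_Icc
  measure_ne_top I hI' := by
    obtain ⟨a, b, -, rfl⟩ := hI I hI'
    simp

theorem Real.tendsto_vitaliFamily_filterAt_of_antitone_Icc {x : ℝ} {I : ℕ → Set ℝ}
    (hI : ∀ n, ∃ a b, a < b ∧ I n = Icc a b) (hanti : Antitone I) (hx : ⋂ n, I n = {x}) :
    Tendsto I atTop ((IsUnifLocDoublingMeasure.vitaliFamily volume 1).filterAt x) := by
  have hmem (n : ℕ) : x ∈ I n := mem_iInter.1 (hx ▸ mem_singleton x) n
  have hvol : Tendsto (fun n => volume (I n)) atTop (𝓝 0) := by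
    have hmeas (n : ℕ) : NullMeasurableSet (I n) volume := by
      obtain ⟨a, b, -, hIn⟩ := hI n
      exact hIn ▸ measurableSet_Icc.nullMeasurableSet
    have hfin : volume (I 0) ≠ ∞ := by
      obtain ⟨a, b, -, hIn⟩ := hI 0
      simp [hIn]
    simpa [Function.comp_def, hx] using tendsto_measure_iInter_atTop hmeas hanti ⟨0, hfin⟩
  rw [VitaliFamily.tendsto_filterAt_iff]
  refine ⟨.of_forall fun n => ?_, fun ε hε => ?_⟩
  · obtain ⟨a, b, hab, hIn⟩ := hI n
    have hxn := hmem n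
    rw [hIn] at hxn ⊢
    rw [Real.Icc_eq_closedBall]
    refine IsUnifLocDoublingMeasure.closedBall_mem_vitaliFamily_of_dist_le_mul _ ?_ (by linarith)
    rw [one_mul, Real.dist_eq, abs_le]
    constructor <;> linarith [hxn.1, hxn.2]
  · filter_upwards [hvol.eventually (gt_mem_nhds (ENNReal.ofReal_pos.2 hε))] with n hn y hy
    obtain ⟨a, b, hab, hIn⟩ := hI n
    have hxn := hmem n
    rw [hIn] at hxn hn hy
    rw [Real.volume_Icc, ENNReal.ofReal_lt_ofReal_iff hε] at hn
    rw [Metric.mem_closedBall, Real.dist_eq, abs_le]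
    constructor <;> linarith [hy.1, hy.2, hxn.1, hxn.2]

theorem stmt_0_general (X : Set ℝ) (hX : MeasurableSet X)
    (J : ℕ → ℝ → Set ℝ)
    (hJint : ∀ x ∈ X, ∀ i, ∃ a b : ℝ, a < b ∧ J i x = Set.Icc a b)
    (hmem : ∀ x ∈ X, ∀ i, x ∈ J i x)
    (hnest : ∀ x ∈ X, ∀ i, J (i + 1) x ⊆ J i x)
    (hconv : ∀ x ∈ X, (⋂ i, J i x) = {x})
    (hdisj : ∀ x₁ ∈ X, ∀ x₂ ∈ X, ∀ i, J i x₁ = J i x₂ ∨ Disjoint (J i x₁) (J i x₂))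
    (Q : ℕ → Set ℝ)
    (q : ℕ → ℝ → ℝ)
    (hq : ∀ x ∈ X, ∀ n,
      q n x = (volume (Q n ∩ J n x)).toReal / (volume (J n x)).toReal)
    (hsum : ∀ᵐ x ∂(volume.restrict X), Summable fun n => q n x) :
    volume {x | x ∈ X ∧ {n | x ∈ Q n}.Finite} = volume X := by
  have h𝓘 (n : ℕ) : IsCountableCellFamily volume (J n '' X) := by
    refine isCountableCellFamily_volume_of_Icc
      (pairwiseDisjoint_image_of_eq_or_disjoint fun x hx y hy => hdisj x hx y hy n) ?_
    rintro _ ⟨x, hx, rfl⟩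
    exact hJint x hx n
  have hdensity (x : ℝ) (hx : x ∈ X) (n : ℕ) :
      partitionDensity volume (J n '' X) (Q n) x = ENNReal.ofReal (q n x) := by
    obtain ⟨a, b, hab, hJ⟩ := hJint x hx n
    have hJ0 : volume (J n x) ≠ 0 := by simp [hJ, hab]
    have hJtop : volume (J n x) ≠ ∞ := by simp [hJ]
    rw [partitionDensity_eq_of_mem (h𝓘 n).pairwiseDisjoint ⟨x, hx, rfl⟩ (hmem x hx n), hq x hx n,
      ← ENNReal.toReal_div, ENNReal.ofReal_toReal
        (ENNReal.div_ne_top (measure_inter_lt_top_of_right_ne_top hJtop).ne hJ0)]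
  have hsum' : ∀ᵐ x ∂volume.restrict X, ∑' n, partitionDensity volume (J n '' X) (Q n) x ≠ ∞ := by
    filter_upwards [hsum, ae_restrict_mem hX] with x hs hx
    have hq0 (n : ℕ) : 0 ≤ q n x := by rw [hq x hx n]; positivity
    rw [tsum_congr (hdensity x hx), ← ENNReal.ofReal_tsum_of_nonneg hq0 hs]
    exact ENNReal.ofReal_ne_top
  have hfin := VitaliFamily.ae_eventually_notMem_of_tsum_partitionDensity_ne_top
    (IsUnifLocDoublingMeasure.vitaliFamily volume 1) hX h𝓘
    (fun x hx n => ⟨⟨x, hx, rfl⟩, hmem x hx n⟩)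
    (fun x hx => Real.tendsto_vitaliFamily_filterAt_of_antitone_Icc (hJint x hx)
      (antitone_nat_of_succ_le (hnest x hx)) (hconv x hx)) hsum'
  rw [ae_restrict_iff' hX] at hfin
  refine measure_congr (eventuallyEq_set.2 ?_)
  filter_upwards [hfin] with x hx
  simp only [← Nat.cofinite_eq_atTop, eventually_cofinite, not_not] at hx ⊢
  exact ⟨And.left, fun h => ⟨h, hx h⟩⟩

/-- Borel–Cantelli type lemma for nested interval families. -/
theorem stmt_0 (X : Set ℝ) (hX : MeasurableSet X)
    (J : ℕ → ℝ → Set ℝ)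
    (hJint : ∀ x ∈ X, ∀ i, ∃ a b : ℝ, a < b ∧ J i x = Set.Icc a b)
    (hmem : ∀ x ∈ X, ∀ i, x ∈ J i x)
    (hnest : ∀ x ∈ X, ∀ i, J (i + 1) x ⊆ J i x)
    (hconv : ∀ x ∈ X, (⋂ i, J i x) = {x})
    (hdisj : ∀ x₁ ∈ X, ∀ x₂ ∈ X, ∀ i, J i x₁ = J i x₂ ∨ Disjoint (J i x₁) (J i x₂))
    (Q : ℕ → Set ℝ) (hQ : ∀ n, MeasurableSet (Q n))
    (q : ℕ → ℝ → ℝ)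
    (hq : ∀ x ∈ X, ∀ n,
      q n x = (volume (Q n ∩ J n x)).toReal / (volume (J n x)).toReal)
    (hsum : ∀ᵐ x ∂(volume.restrict X), Summable fun n => q n x) :
    volume {x | x ∈ X ∧ {n | x ∈ Q n}.Finite} = volume X :=
  stmt_0_general X hX J hJint hmem hnest hconv hdisj Q q hq hsum
end

section
/- Suppose f : ℕ → ℝ is unbounded from above and there is a constant a > 0 such that f(n+1) > exp(f(n)^a) for all n. Then f grows at least torrentially: there exists k ∈ ℤ such that f(n) ≥ T(max{n+k,1}) for all sufficiently large n, where T is defined by T(1) = 1 and T(n+1) = 2^{T(n)}. -/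
open Filter

/-- If f is unbounded from above and f(n+1) > exp(f(n)^a) for some a > 0,
then f grows at least torrentially. -/
theorem stmt_5 (T : ℕ → ℕ) (hT1 : T 1 = 1) (hTs : ∀ n ≥ 1, T (n + 1) = 2 ^ T n)
    (f : ℕ → ℝ) (hub : ¬ BddAbove (Set.range f))
    (a : ℝ) (ha : 0 < a)
    (hrec : ∀ n : ℕ, f (n + 1) > Real.exp (f n ^ a)) :
    ∃ k : ℤ, ∀ᶠ n : ℕ in atTop, (T (max ((n : ℤ) + k) 1).toNat : ℝ) ≤ f n := by
  -- T m ≥ m for m ≥ 1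
  have hTm : ∀ m, 1 ≤ m → m ≤ T m := by
    intro m hm
    induction m with
    | zero => omega
    | succ n ih =>
      rcases Nat.eq_or_lt_of_le hm with h | h
      · rw [show n + 1 = 1 by omega, hT1]
      · have hn : 1 ≤ n := by omega
        have := ih hn
        rw [hTs n hn]
        have := Nat.lt_two_pow_self (n := T n)
        omega
  -- monotonicity
  have hTmono : ∀ m, 1 ≤ m → ∀ j, T m ≤ T (m + j) := by
    intro m hm j
    induction j with
    | zero => simp
    | succ j ih =>
      have h1 : 1 ≤ m + j := by omega
      have := Nat.lt_two_pow_self (n := T (m + j))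
      rw [show m + (j+1) = (m+j) + 1 from rfl, hTs _ h1]
      omega
  set c : ℝ := max 1 (2 / a) with hc
  have hc1 : (1 : ℝ) ≤ c := le_max_left _ _
  have hc0 : (0 : ℝ) ≤ c := by linarith
  have hca : 2 ≤ c * a := by
    have : 2 / a ≤ c := le_max_right _ _
    exact (div_le_iff₀ ha).mp this
  set M : ℕ := ⌈c⌉₊ + 1 with hM
  have hM1 : 1 ≤ M := by omega
  have hcM : c ≤ (M : ℝ) := by
    calc c ≤ (⌈c⌉₊ : ℝ) := Nat.le_ceil c
    _ ≤ M := by exact_mod_cast Nat.le_succ _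
  have hTMj : ∀ j, c ≤ (T (M + j) : ℝ) := by
    intro j
    have h1 : M + j ≤ T (M + j) := hTm _ (by omega)
    calc c ≤ (M : ℝ) := hcM
    _ ≤ ((M + j : ℕ) : ℝ) := by exact_mod_cast Nat.le_add_right _ _
    _ ≤ (T (M + j) : ℝ) := by exact_mod_cast h1
  have hTMj1 : ∀ j, (1 : ℝ) ≤ (T (M + j) : ℝ) := fun j => le_trans hc1 (hTMj j)
  -- get starting point
  rw [not_bddAbove_iff] at hub
  obtain ⟨y, ⟨N, rfl⟩, hlt⟩ := hub ((T M : ℝ) ^ c)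
  have key : ∀ j, ((T (M + j) : ℝ)) ^ c ≤ f (N + j) := by
    intro j
    induction j with
    | zero => simpa using hlt.le
    | succ j ih =>
      set t : ℝ := (T (M + j) : ℝ) with ht
      have ht1 : (1 : ℝ) ≤ t := hTMj1 j
      have htc : c ≤ t := hTMj j
      have ht0 : (0 : ℝ) ≤ t := by linarith
      have h1 : t ^ (c * a) ≤ f (N + j) ^ a := by
        rw [Real.rpow_mul ht0]
        exact Real.rpow_le_rpow (Real.rpow_nonneg ht0 c) ih ha.le
      have h2 : t * c * Real.log 2 ≤ t ^ (c * a) := by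
        have l2 : Real.log 2 ≤ 1 := by
          have := Real.log_le_sub_one_of_pos (by norm_num : (0:ℝ) < 2)
          linarith
        have : t * c * Real.log 2 ≤ t * t * 1 := by
          apply mul_le_mul
          · exact mul_le_mul_of_nonneg_left htc ht0
          · exact l2
          · exact Real.log_nonneg (by norm_num)
          · positivity
        calc t * c * Real.log 2 ≤ t * t := by linarith
        _ = t ^ (2 : ℝ) := by
            rw [show (2:ℝ) = ((2:ℕ):ℝ) by norm_num, Real.rpow_natCast]; ring
        _ ≤ t ^ (c * a) := Real.rpow_le_rpow_of_exponent_le ht1 hca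
      have h3 : (T (M + (j + 1)) : ℝ) ^ c = Real.exp (t * c * Real.log 2) := by
        rw [show M + (j + 1) = (M + j) + 1 from rfl, hTs _ (by omega)]
        push_cast
        rw [← Real.rpow_natCast (2:ℝ) (T (M+j)), ← Real.rpow_mul (by norm_num : (0:ℝ) ≤ 2),
          Real.rpow_def_of_pos (by norm_num : (0:ℝ) < 2)]
        congr 1
        rw [ht]
        ring
      rw [show N + (j + 1) = (N + j) + 1 from rfl]
      have := hrec (N + j)
      rw [h3]
      calc Real.exp (t * c * Real.log 2) ≤ Real.exp (f (N + j) ^ a) := by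
            apply Real.exp_le_exp.mpr; linarith
      _ ≤ f (N + j + 1) := (hrec (N + j)).le
  refine ⟨(M : ℤ) - N, ?_⟩
  filter_upwards [eventually_ge_atTop N] with n hn
  have hmax : (max ((n : ℤ) + ((M:ℤ) - N)) 1).toNat = M + (n - N) := by omega
  rw [hmax]
  calc (T (M + (n - N)) : ℝ) ≤ (T (M + (n - N)) : ℝ) ^ c := by
        nth_rewrite 1 [← Real.rpow_one (T (M + (n - N)) : ℝ)]
        exact Real.rpow_le_rpow_of_exponent_le (hTMj1 _) hc1
  _ ≤ f (N + (n - N)) := key (n - N)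
  _ = f n := by congr 1; omega
end

section
/- Define the γ-capacity of a measurable set X inside an interval I by p_γ(X|I) = sup over h ∈ QS(γ) of |h(X)|/|h(I)|. If (I_j) is a countable family of pairwise disjoint subintervals of I and X ⊆ ⋃_j I_j, then p_γ(X|I) ≤ p_γ(⋃_j I_j | I) · sup_j p_γ(X ∩ I_j | I_j). -/
open MeasureTheory

/-- The γ-capacity of `X` in `I`: the supremum over an abstract family `𝒬`
of increasing homeomorphisms of ℝ of the ratio `|h(X)|/|h(I)|`. -/
noncomputable def cap (𝒬 : Set (ℝ → ℝ)) (X I : Set ℝ) : ENNReal :=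
  ⨆ h ∈ 𝒬, volume (h '' X) / volume (h '' I)

lemma image_Icc_aux {h : ℝ → ℝ} (hm : StrictMono h) (hs : Function.Surjective h)
    (a b : ℝ) : h '' Set.Icc a b = Set.Icc (h a) (h b) := by
  ext y
  constructor
  · rintro ⟨x, ⟨hx1, hx2⟩, rfl⟩
    exact ⟨hm.monotone hx1, hm.monotone hx2⟩
  · rintro ⟨hy1, hy2⟩
    obtain ⟨x, rfl⟩ := hs y
    exact ⟨x, ⟨(hm.le_iff_le).mp hy1, (hm.le_iff_le).mp hy2⟩, rfl⟩

lemma cap_mul_ge {𝒬 : Set (ℝ → ℝ)} {h : ℝ → ℝ} (hh : h ∈ 𝒬) (X I : Set ℝ)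
    (hpos : volume (h '' I) ≠ 0) (hfin : volume (h '' I) ≠ ⊤) :
    volume (h '' X) ≤ cap 𝒬 X I * volume (h '' I) := by
  have hc : volume (h '' X) / volume (h '' I) ≤ cap 𝒬 X I := by
    exact le_iSup₂ (f := fun g (_ : g ∈ 𝒬) => volume (g '' X) / volume (g '' I)) h hh
  calc volume (h '' X) = volume (h '' X) / volume (h '' I) * volume (h '' I) :=
        (ENNReal.div_mul_cancel hpos hfin).symm
    _ ≤ cap 𝒬 X I * volume (h '' I) := mul_le_mul_left hc _

/-- Tree decomposition inequality for capacities: if the `I j` are pairwise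
disjoint subintervals of `I` and `X ⊆ ⋃ j, I j`, then
`p(X|I) ≤ p(⋃ I j | I) · sup_j p(X ∩ I j | I j)`. -/
theorem stmt_7 (𝒬 : Set (ℝ → ℝ))
    (h𝒬 : ∀ h ∈ 𝒬, StrictMono h ∧ Continuous h ∧ Function.Bijective h)
    (I : Set ℝ) (hI : ∃ a b : ℝ, a < b ∧ I = Set.Icc a b)
    (Ij : ℕ → Set ℝ)
    (hIj : ∀ j, ∃ a b : ℝ, a < b ∧ Ij j = Set.Icc a b)
    (hsub : ∀ j, Ij j ⊆ I)
    (hdisj : Pairwise (Function.onFun Disjoint Ij))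
    (X : Set ℝ) (hX : X ⊆ ⋃ j, Ij j) :
    cap 𝒬 X I ≤ cap 𝒬 (⋃ j, Ij j) I * ⨆ j, cap 𝒬 (X ∩ Ij j) (Ij j) := by
  rw [cap]
  apply iSup₂_le
  intro h hh
  obtain ⟨hmono, hcont, hinj, hsurj⟩ := h𝒬 h hh
  obtain ⟨a, b, hab, hIab⟩ := hI
  -- basic facts about images of intervals
  have himgI : h '' I = Set.Icc (h a) (h b) := by
    rw [hIab]; exact image_Icc_aux hmono hsurj a b
  have hIfin : volume (h '' I) ≠ ⊤ := by
    rw [himgI, Real.volume_Icc]; exact ENNReal.ofReal_ne_top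
  have hIpos : volume (h '' I) ≠ 0 := by
    rw [himgI, Real.volume_Icc]
    simp only [ne_eq, ENNReal.ofReal_eq_zero, not_le, sub_pos]
    exact hmono hab
  have hIjfin : ∀ j, volume (h '' Ij j) ≠ ⊤ := fun j => by
    obtain ⟨c, d, _, hcd⟩ := hIj j
    rw [hcd, image_Icc_aux hmono hsurj, Real.volume_Icc]
    exact ENNReal.ofReal_ne_top
  have hIjpos : ∀ j, volume (h '' Ij j) ≠ 0 := fun j => by
    obtain ⟨c, d, hcd0, hcd⟩ := hIj j
    rw [hcd, image_Icc_aux hmono hsurj, Real.volume_Icc]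
    simp only [ne_eq, ENNReal.ofReal_eq_zero, not_le, sub_pos]
    exact hmono hcd0
  set S := ⨆ j, cap 𝒬 (X ∩ Ij j) (Ij j) with hS
  -- step 1 : |h X| ≤ S * |h (⋃ Ij)|
  have step1 : volume (h '' X) ≤ S * volume (h '' ⋃ j, Ij j) := by
    have hXsub : h '' X ⊆ ⋃ j, h '' (X ∩ Ij j) := by
      intro y hy
      obtain ⟨x, hx, rfl⟩ := hy
      obtain ⟨j, hj⟩ := Set.mem_iUnion.mp (hX hx)
      exact Set.mem_iUnion.mpr ⟨j, ⟨x, ⟨hx, hj⟩, rfl⟩⟩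
    calc volume (h '' X) ≤ ∑' j, volume (h '' (X ∩ Ij j)) :=
          le_trans (measure_mono hXsub) (measure_iUnion_le _)
      _ ≤ ∑' j, S * volume (h '' Ij j) := by
          apply ENNReal.tsum_le_tsum
          intro j
          calc volume (h '' (X ∩ Ij j)) ≤ cap 𝒬 (X ∩ Ij j) (Ij j) * volume (h '' Ij j) :=
                cap_mul_ge hh _ _ (hIjpos j) (hIjfin j)
            _ ≤ S * volume (h '' Ij j) := mul_le_mul_left (hS ▸ le_iSup (fun j => cap 𝒬 (X ∩ Ij j) (Ij j)) j) _
      _ = S * ∑' j, volume (h '' Ij j) := ENNReal.tsum_mul_left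
      _ = S * volume (⋃ j, h '' Ij j) := by
          congr 1
          refine (measure_iUnion ?_ ?_).symm
          · intro i j hij
            exact (Set.disjoint_image_iff hinj).mpr (hdisj hij)
          · intro j
            obtain ⟨c, d, _, hcd⟩ := hIj j
            rw [hcd, image_Icc_aux hmono hsurj]
            exact measurableSet_Icc
      _ = S * volume (h '' ⋃ j, Ij j) := by rw [Set.image_iUnion]
  -- step 2 : |h (⋃ Ij)| ≤ cap (⋃ Ij) I * |h I|
  have step2 : volume (h '' ⋃ j, Ij j) ≤ cap 𝒬 (⋃ j, Ij j) I * volume (h '' I) :=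
    cap_mul_ge hh _ _ hIpos hIfin
  rw [ENNReal.div_le_iff hIpos hIfin]
  calc volume (h '' X) ≤ S * volume (h '' ⋃ j, Ij j) := step1
    _ ≤ S * (cap 𝒬 (⋃ j, Ij j) I * volume (h '' I)) := mul_le_mul_right step2 _
    _ = cap 𝒬 (⋃ j, Ij j) I * S * volume (h '' I) := by ring
end
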